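/- arXiv:2408.10736 — 2 statements merged into one kernel-verified Lean document; each statement's English description precedes it below -/
import Mathlib

section
/- Let f : ℝ³ → [0,∞) be measurable, not almost everywhere zero, with ∫_{ℝ³} |p| f(p) dp < ∞, and let h ∈ ℝ³. Then F attains a global minimum on the set of positive definite matrices in Sym3; that is, there exists a positive definite B₀ ∈ Sym3 such that F(B₀) ≤ F(B) for every positive definite B ∈ Sym3. -/
/-! Every term of `F` is nonnegative on positive definite matrices. On a sublevel set the term
`2 (det B)^{-1/2}` keeps `det B` away from zero, and the integral `Φ(B) = ∫ √(pᵀBp) f(p) dp`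
keeps `B` bounded: `Φ` is continuous, homogeneous of degree `1/2`, and positive at every nonzero
positive semidefinite `B`, because `{p | pᵀBp = 0} = ker B` is a null proper subspace while `f` is
not a.e. zero; compactness of the unit sphere then gives `Φ(B) ≥ m √‖B‖` with `m > 0`. Hence the
sublevel set `{F ≤ F(1)}` lies in a compact set of positive definite matrices, on which the
continuous `F` attains a minimum, and that minimum is global. -/

open MeasureTheory Matrix Real Filter Topology Set Asymptotics

noncomputable section

/-- 3×3 real matrices; symmetric ones form `Sym3`, encoded via `Matrix.IsSymm`/`Matrix.PosDef`. -/
abbrev Mat3 := Matrix (Fin 3) (Fin 3) ℝ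

/-- vectors in ℝ³ -/
abbrev Vec3 := Fin 3 → ℝ

/-- Euclidean norm on ℝ³. -/
def enorm3 (p : Vec3) : ℝ := Real.sqrt (∑ i, p i ^ 2)

/-- the quadratic form pᵀBp. -/
def quadForm (B : Mat3) (p : Vec3) : ℝ := p ⬝ᵥ B.mulVec p

/-- Ψ(B)_{ij} = 4π (det B)^{1/2} ∫ (pᵀBp)^{−1/2} p_i p_j f(p) dp. -/
def PsiM (f : Vec3 → ℝ) (B : Mat3) : Mat3 :=
  Matrix.of fun i j =>
    (4 * π) * Real.sqrt B.det * ∫ p : Vec3, (Real.sqrt (quadForm B p))⁻¹ * (p i * p j * f p)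

/-- χ_b(k)_{ij} = 4π (det b)^{1/2} ∫ (pᵀbp)^{−3/2} ((bp)ᵀ k (bp)) p_i p_j f(p) dp. -/
def chiM (f : Vec3 → ℝ) (b : Mat3) (k : Mat3) : Mat3 :=
  Matrix.of fun i j =>
    (4 * π) * Real.sqrt b.det *
      ∫ p : Vec3, ((Real.sqrt (quadForm b p))⁻¹ ^ 3) * (quadForm k (b.mulVec p) * (p i * p j * f p))

/-- With u = ah, w = kh, α = hᵀah and b = a⁻¹:
M_a(k) = (2/det a)((hᵀkh) a + α k − 2(u wᵀ + w uᵀ) + tr(bk)(2 u uᵀ − α a)). -/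
def MM (a : Mat3) (h : Vec3) (k : Mat3) : Mat3 :=
  (2 / a.det) • ((h ⬝ᵥ k.mulVec h) • a + (h ⬝ᵥ a.mulVec h) • k
    - (2:ℝ) • (vecMulVec (a.mulVec h) (k.mulVec h) + vecMulVec (k.mulVec h) (a.mulVec h))
    + (a⁻¹ * k).trace • ((2:ℝ) • vecMulVec (a.mulVec h) (a.mulVec h) - (h ⬝ᵥ a.mulVec h) • a))

/-- The Fuchsian condition at B (with A = B⁻¹):
2Ψ(B) = A − (2/det A)((hᵀAh) A − 2 (Ah)(Ah)ᵀ). -/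
def FuchsCond (f : Vec3 → ℝ) (h : Vec3) (B : Mat3) : Prop :=
  (2:ℝ) • PsiM f B =
    B⁻¹ - (2 / (B⁻¹).det) •
      ((h ⬝ᵥ (B⁻¹).mulVec h) • B⁻¹ - (2:ℝ) • vecMulVec ((B⁻¹).mulVec h) ((B⁻¹).mulVec h))

/-- F(B) = 16π ∫ (pᵀBp)^{1/2} f dp + 2 (det B)^{−1/2} + 4 (det B)^{1/2} hᵀB⁻¹h. -/
def Ffun (f : Vec3 → ℝ) (h : Vec3) (B : Mat3) : ℝ :=
  16 * π * (∫ p : Vec3, Real.sqrt (quadForm B p) * f p)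
    + 2 * (Real.sqrt B.det)⁻¹ + 4 * Real.sqrt B.det * (h ⬝ᵥ (B⁻¹).mulVec h)

attribute [local instance] Matrix.normedAddCommGroup Matrix.normedSpace

section SqrtQuadIntegral

variable {ι : Type*} [Fintype ι]

lemma isClosed_setOf_posSemidef : IsClosed {B : Matrix ι ι ℝ | B.PosSemidef} := by
  simp only [posSemidef_iff_dotProduct_mulVec, ofPred_and, ofPred_forall]
  exact (isClosed_eq continuous_id.matrix_conjTranspose continuous_id).inter
    (isClosed_iInter fun x => isClosed_le continuous_const
      (continuous_const.dotProduct (continuous_id.matrix_mulVec continuous_const)))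

lemma isCompact_setOf_posSemidef_le_det_norm_le [DecidableEq ι] (d R : ℝ) :
    IsCompact {B : Matrix ι ι ℝ | B.PosSemidef ∧ d ≤ B.det ∧ ‖B‖ ≤ R} := by
  have hclosed : IsClosed {B : Matrix ι ι ℝ | B.PosSemidef ∧ d ≤ B.det} :=
    isClosed_setOf_posSemidef.inter (isClosed_le continuous_const continuous_id.matrix_det)
  have hset : {B : Matrix ι ι ℝ | B.PosSemidef ∧ d ≤ B.det ∧ ‖B‖ ≤ R} =
      {B | B.PosSemidef ∧ d ≤ B.det} ∩ Metric.closedBall 0 R := by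
    ext B
    simp [and_assoc]
  rw [hset]
  exact (isCompact_closedBall 0 R).inter_left hclosed

lemma abs_dotProduct_mulVec_le (B : Matrix ι ι ℝ) (p : ι → ℝ) :
    |p ⬝ᵥ B *ᵥ p| ≤ Fintype.card ι ^ 2 * ‖B‖ * ‖p‖ ^ 2 := by
  have hentry : ∀ i j, |p i * B i j * p j| ≤ ‖B‖ * ‖p‖ ^ 2 := fun i j => by
    rw [abs_mul, abs_mul, sq]
    have hpi : |p i| ≤ ‖p‖ := norm_le_pi_norm p i
    have hpj : |p j| ≤ ‖p‖ := norm_le_pi_norm p j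
    have hB : |B i j| ≤ ‖B‖ := norm_entry_le_entrywise_sup_norm B
    calc |p i| * |B i j| * |p j| ≤ ‖p‖ * ‖B‖ * ‖p‖ := by gcongr
      _ = ‖B‖ * (‖p‖ * ‖p‖) := by ring
  calc |p ⬝ᵥ B *ᵥ p| = |∑ i, ∑ j, p i * B i j * p j| := by
        simp only [dotProduct, mulVec, Finset.mul_sum, mul_assoc]
    _ ≤ ∑ i, ∑ j, |p i * B i j * p j| :=
        (Finset.abs_sum_le_sum_abs _ _).trans
          (Finset.sum_le_sum fun i _ => Finset.abs_sum_le_sum_abs _ _)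
    _ ≤ ∑ _i : ι, ∑ _j : ι, ‖B‖ * ‖p‖ ^ 2 :=
        Finset.sum_le_sum fun i _ => Finset.sum_le_sum fun j _ => hentry i j
    _ = Fintype.card ι ^ 2 * ‖B‖ * ‖p‖ ^ 2 := by
        simp only [Finset.sum_const, Finset.card_univ, nsmul_eq_mul]
        ring

lemma sqrt_dotProduct_mulVec_le (B : Matrix ι ι ℝ) (p : ι → ℝ) :
    √(p ⬝ᵥ B *ᵥ p) ≤ Fintype.card ι * √‖B‖ * ‖p‖ := by
  calc √(p ⬝ᵥ B *ᵥ p) ≤ √(Fintype.card ι ^ 2 * ‖B‖ * ‖p‖ ^ 2) :=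
        sqrt_le_sqrt ((le_abs_self _).trans (abs_dotProduct_mulVec_le B p))
    _ = Fintype.card ι * √‖B‖ * ‖p‖ := by
        rw [sqrt_mul (by positivity), sqrt_mul (by positivity), sqrt_sq (by positivity),
          sqrt_sq (norm_nonneg p)]

def sqrtQuadIntegral (f : (ι → ℝ) → ℝ) (B : Matrix ι ι ℝ) : ℝ :=
  ∫ p, √(p ⬝ᵥ B *ᵥ p) * f p

variable {f : (ι → ℝ) → ℝ}

lemma sqrtQuadIntegral_smul {t : ℝ} (ht : 0 ≤ t) (B : Matrix ι ι ℝ) :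
    sqrtQuadIntegral f (t • B) = √t * sqrtQuadIntegral f B := by
  rw [sqrtQuadIntegral, sqrtQuadIntegral, ← integral_const_mul]
  congr 1 with p
  rw [smul_mulVec, dotProduct_smul, smul_eq_mul, sqrt_mul ht, mul_assoc]

lemma norm_sqrt_dotProduct_mulVec_mul_le {B : Matrix ι ι ℝ} {M : ℝ} (hB : ‖B‖ ≤ M) (p : ι → ℝ) :
    ‖√(p ⬝ᵥ B *ᵥ p) * f p‖ ≤ Fintype.card ι * √M * ‖‖p‖ * f p‖ := by
  rw [norm_mul, norm_mul, norm_norm, Real.norm_of_nonneg (sqrt_nonneg _), ← mul_assoc]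
  gcongr
  exact (sqrt_dotProduct_mulVec_le B p).trans (by gcongr)

variable (hmeas : Measurable f)
include hmeas

lemma aestronglyMeasurable_sqrt_dotProduct_mulVec_mul (B : Matrix ι ι ℝ) :
    AEStronglyMeasurable fun p => √(p ⬝ᵥ B *ᵥ p) * f p :=
  ((continuous_sqrt.comp (continuous_id.dotProduct
    (continuous_const.matrix_mulVec continuous_id))).measurable.mul hmeas).aestronglyMeasurable

variable (hint : Integrable fun p => ‖p‖ * f p)
include hint

lemma integrable_sqrt_dotProduct_mulVec_mul (B : Matrix ι ι ℝ) :
    Integrable fun p => √(p ⬝ᵥ B *ᵥ p) * f p :=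
  (hint.norm.const_mul _).mono' (aestronglyMeasurable_sqrt_dotProduct_mulVec_mul hmeas B)
    (.of_forall (norm_sqrt_dotProduct_mulVec_mul_le le_rfl))

lemma continuous_sqrtQuadIntegral : Continuous (sqrtQuadIntegral f) := by
  -- not found through the type synonym `Matrix`
  have : FirstCountableTopology (Matrix ι ι ℝ) :=
    inferInstanceAs (FirstCountableTopology (ι → ι → ℝ))
  refine continuous_iff_continuousAt.2 fun B₀ => continuousAt_of_dominated
    (bound := fun p => Fintype.card ι * √(‖B₀‖ + 1) * ‖‖p‖ * f p‖)
    (.of_forall (aestronglyMeasurable_sqrt_dotProduct_mulVec_mul hmeas)) ?_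
    (hint.norm.const_mul _) (.of_forall fun p => ?_)
  · filter_upwards [Metric.ball_mem_nhds B₀ one_pos] with B hB
    exact .of_forall (norm_sqrt_dotProduct_mulVec_mul_le (norm_lt_of_mem_ball hB).le)
  · exact ((continuous_sqrt.comp (continuous_const.dotProduct
      (continuous_id.matrix_mulVec continuous_const))).mul continuous_const).continuousAt

end SqrtQuadIntegral

section LowerBound

variable {ι : Type*} [Fintype ι]

lemma volume_setOf_dotProduct_mulVec_eq_zero {B : Matrix ι ι ℝ} (hB : B.PosSemidef)
    (hB0 : B ≠ 0) : volume {p : ι → ℝ | p ⬝ᵥ B *ᵥ p = 0} = 0 := by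
  have hker : {p : ι → ℝ | p ⬝ᵥ B *ᵥ p = 0} = LinearMap.ker B.mulVecLin := by
    ext p
    simpa using hB.dotProduct_mulVec_zero_iff p
  rw [hker]
  refine Measure.addHaar_submodule _ _ fun htop => hB0 ?_
  classical
  have hzero := LinearMap.ker_eq_top.mp htop
  rw [← Matrix.toLin'_apply'] at hzero
  exact Matrix.toLin'.map_eq_zero_iff.mp hzero

variable {f : (ι → ℝ) → ℝ} (hmeas : Measurable f) (hnonneg : ∀ p, 0 ≤ f p)
  (hne : ¬ f =ᵐ[volume] 0) (hint : Integrable fun p => ‖p‖ * f p)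
include hmeas hnonneg hne hint

lemma sqrtQuadIntegral_pos {B : Matrix ι ι ℝ} (hB : B.PosSemidef) (hB0 : B ≠ 0) :
    0 < sqrtQuadIntegral f B := by
  rw [sqrtQuadIntegral, integral_pos_iff_support_of_nonneg
    (fun p => mul_nonneg (sqrt_nonneg _) (hnonneg p))
    (integrable_sqrt_dotProduct_mulVec_mul hmeas hint B)]
  have hf : volume (Function.support f) ≠ 0 := by
    rwa [EventuallyEq, ae_iff] at hne
  have hsub : Function.support f \ {p | p ⬝ᵥ B *ᵥ p = 0} ⊆
      Function.support fun p => √(p ⬝ᵥ B *ᵥ p) * f p := by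
    intro p ⟨hfp, hq⟩
    exact mul_ne_zero (sqrt_ne_zero'.2 ((hB.dotProduct_mulVec_nonneg p).lt_of_ne' hq)) hfp
  calc 0 < volume (Function.support f) := pos_iff_ne_zero.2 hf
    _ = volume (Function.support f \ {p | p ⬝ᵥ B *ᵥ p = 0}) :=
        (measure_sdiff_null (volume_setOf_dotProduct_mulVec_eq_zero hB hB0)).symm
    _ ≤ _ := measure_mono hsub

theorem exists_pos_mul_sqrt_norm_le_sqrtQuadIntegral :
    ∃ m > 0, ∀ B : Matrix ι ι ℝ, B.PosSemidef → m * √‖B‖ ≤ sqrtQuadIntegral f B := by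
  have hS : IsCompact ({B : Matrix ι ι ℝ | B.PosSemidef} ∩ Metric.sphere 0 1) :=
    (isCompact_sphere 0 1).inter_left isClosed_setOf_posSemidef
  obtain ⟨m, hm, hmS⟩ := hS.exists_forall_le'
    (continuous_sqrtQuadIntegral hmeas hint).continuousOn fun B hB =>
      sqrtQuadIntegral_pos hmeas hnonneg hne hint hB.1 (ne_zero_of_mem_unit_sphere ⟨B, hB.2⟩)
  refine ⟨m, hm, fun B hB => ?_⟩
  rcases eq_or_ne B 0 with rfl | hB0
  · simp [sqrtQuadIntegral]
  have hn : 0 < ‖B‖ := norm_pos_iff.2 hB0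
  have hunit : ‖B‖⁻¹ • B ∈ {B : Matrix ι ι ℝ | B.PosSemidef} ∩ Metric.sphere 0 1 :=
    ⟨hB.smul (inv_nonneg.2 hn.le), by simp [norm_smul, hn.ne']⟩
  calc m * √‖B‖ ≤ sqrtQuadIntegral f (‖B‖⁻¹ • B) * √‖B‖ := by gcongr; exact hmS _ hunit
    _ = sqrtQuadIntegral f B := by
        rw [sqrtQuadIntegral_smul (inv_nonneg.2 hn.le), sqrt_inv, mul_comm, ← mul_assoc,
          mul_inv_cancel₀ (sqrt_pos.2 hn).ne', one_mul]

end LowerBound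

lemma norm_le_enorm3 (p : Vec3) : ‖p‖ ≤ enorm3 p :=
  (pi_norm_le_iff_of_nonneg (sqrt_nonneg _)).2 fun i => by
    rw [Real.norm_eq_abs, ← sqrt_sq_eq_abs]
    exact sqrt_le_sqrt (Finset.single_le_sum (fun j _ => sq_nonneg (p j)) (Finset.mem_univ i))

lemma integrable_norm_mul_of_integrable_enorm3_mul {f : Vec3 → ℝ} (hmeas : Measurable f)
    (hint : Integrable fun p => enorm3 p * f p) : Integrable fun p : Vec3 => ‖p‖ * f p :=
  hint.norm.mono' (continuous_norm.measurable.mul hmeas).aestronglyMeasurable <|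
    .of_forall fun p => by
    rw [norm_mul, norm_mul, norm_norm]
    gcongr
    exact (norm_le_enorm3 p).trans (Real.le_norm_self _)

lemma Ffun_eq (f : Vec3 → ℝ) (h : Vec3) (B : Mat3) :
    Ffun f h B = 16 * π * sqrtQuadIntegral f B + 2 * (√B.det)⁻¹ + 4 * √B.det * (h ⬝ᵥ B⁻¹ *ᵥ h) :=
  rfl

section Ffun

variable {f : Vec3 → ℝ} (h : Vec3)

lemma le_Ffun_of_posDef (hnonneg : ∀ p, 0 ≤ f p) {B : Mat3} (hB : B.PosDef) :
    16 * π * sqrtQuadIntegral f B ≤ Ffun f h B ∧ 2 * (√B.det)⁻¹ ≤ Ffun f h B := by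
  have hΦ : 0 ≤ sqrtQuadIntegral f B :=
    integral_nonneg fun p => mul_nonneg (sqrt_nonneg _) (hnonneg p)
  have hdet : 0 ≤ 2 * (√B.det)⁻¹ := by positivity
  have hh : 0 ≤ 4 * √B.det * (h ⬝ᵥ B⁻¹ *ᵥ h) :=
    mul_nonneg (by positivity) (by simpa using hB.inv.posSemidef.dotProduct_mulVec_nonneg h)
  rw [Ffun_eq]
  constructor <;> nlinarith [pi_pos]

variable (hmeas : Measurable f) (hint : Integrable fun p => ‖p‖ * f p)
include hmeas hint

lemma continuousOn_Ffun : ContinuousOn (Ffun f h) {B | 0 < B.det} := by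
  intro B (hB : 0 < B.det)
  have hsqrt : Continuous fun B : Mat3 => √B.det := continuous_sqrt.comp continuous_id.matrix_det
  have hinv : ContinuousAt (fun B : Mat3 => B⁻¹) B :=
    continuousAt_matrix_inv _ (by simpa using continuousAt_inv₀ hB.ne')
  refine ContinuousAt.continuousWithinAt ?_
  simp only [funext (Ffun_eq f h)]
  exact ((continuousAt_const.mul (continuous_sqrtQuadIntegral hmeas hint).continuousAt).add
    (continuousAt_const.mul (hsqrt.continuousAt.inv₀ (sqrt_pos.2 hB).ne'))).add
    ((continuousAt_const.mul hsqrt.continuousAt).mul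
      ((continuous_const.dotProduct
        (continuous_id.matrix_mulVec continuous_const)).continuousAt.comp hinv))

lemma exists_isCompact_posDef_superset_sublevel (hnonneg : ∀ p, 0 ≤ f p)
    (hne : ¬ f =ᵐ[volume] 0) {c : ℝ} (hc : 0 < c) :
    ∃ K : Set Mat3, IsCompact K ∧ (∀ B ∈ K, B.PosDef) ∧
      ∀ B : Mat3, B.PosDef → Ffun f h B ≤ c → B ∈ K := by
  obtain ⟨m, hm, hmΦ⟩ := exists_pos_mul_sqrt_norm_le_sqrtQuadIntegral hmeas hnonneg hne hint
  refine ⟨{B | B.PosSemidef ∧ (2 / c) ^ 2 ≤ B.det ∧ ‖B‖ ≤ (c / (16 * π * m)) ^ 2},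
    isCompact_setOf_posSemidef_le_det_norm_le _ _, fun B hB => ?_, fun B hB hFB => ?_⟩
  · exact hB.1.posDef_iff_det_ne_zero.2 (lt_of_lt_of_le (by positivity) hB.2.1).ne'
  obtain ⟨hΦB, hdetB⟩ := le_Ffun_of_posDef h hnonneg hB
  have hsqrt_det : 0 < √B.det := sqrt_pos.2 hB.det_pos
  refine ⟨hB.posSemidef, ?_, ?_⟩
  · rw [← le_sqrt' (by positivity), div_le_iff₀ hc]
    rw [← div_eq_mul_inv, div_le_iff₀ hsqrt_det] at hdetB
    nlinarith
  · rw [← sqrt_le_left (by positivity), le_div_iff₀ (by positivity)]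
    nlinarith [hmΦ B hB.posSemidef, pi_pos]

end Ffun

/-- F attains a global minimum on positive definite symmetric matrices. -/
theorem Ffun_exists_global_min (f : Vec3 → ℝ) (h : Vec3)
    (hmeas : Measurable f) (hnonneg : ∀ p, 0 ≤ f p)
    (hne : ¬ f =ᵐ[volume] 0)
    (hint : Integrable (fun p : Vec3 => enorm3 p * f p)) :
    ∃ B₀ : Mat3, B₀.PosDef ∧ ∀ B : Mat3, B.PosDef → Ffun f h B₀ ≤ Ffun f h B := by
  have hint' := integrable_norm_mul_of_integrable_enorm3_mul hmeas hint
  have hF₁ : 0 < Ffun f h 1 :=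
    lt_of_lt_of_le (by simp) (le_Ffun_of_posDef h hnonneg PosDef.one).2
  obtain ⟨K, hK, hKpos, hsub⟩ :=
    exists_isCompact_posDef_superset_sublevel h hmeas hint' hnonneg hne hF₁
  have h1K : (1 : Mat3) ∈ K := hsub 1 .one le_rfl
  obtain ⟨B₀, hB₀K, hmin⟩ := hK.exists_isMinOn ⟨1, h1K⟩
    ((continuousOn_Ffun h hmeas hint').mono fun B hB => (hKpos B hB).det_pos)
  refine ⟨B₀, hKpos B₀ hB₀K, fun B hB => ?_⟩
  rcases le_or_gt (Ffun f h B) (Ffun f h 1) with hle | hlt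
  · exact hmin (hsub B hB hle)
  · exact (hmin h1K).trans hlt.le
end
end

section
/- Let f : ℝ³ → [0,∞) be measurable, not almost everywhere zero, with ∫_{ℝ³} |p| f(p) dp < ∞, and let h ∈ ℝ³. If B ∈ Sym3 is positive definite and the Fuchsian condition at B holds, then hᵀAh < (det A)/2, where A = B⁻¹. -/
open MeasureTheory Matrix Real Filter Topology Set Asymptotics

noncomputable section

/-!
Write `α = hᵀAh`, `c = 4π (det B)^{1/2}`, `J = ∫ (h·p)² (pᵀBp)^{-1/2} f` and `S = ∫ (pᵀBp)^{1/2} f`.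
Contracting the Fuchsian equation with `h`, and taking its trace against `B`, gives
`2cJ = α + 2α²/det A` and `2cS = 3 - 2α/det A`. Cauchy–Schwarz for the form `B` gives
`(h·p)² ≤ α pᵀBp`, strictly off the line `ℝ Ah`; this line is Lebesgue-null and `f` is not a.e.
zero, so `J < αS`. Substituting, `4α²/det A < 2α`, i.e. `2α < det A`.
-/

namespace Matrix

variable {n : Type*} {B : Matrix n n ℝ}

lemma PosDef.isSymm (hB : B.PosDef) : B.IsSymm := isHermitian_iff_isSymm.1 hB.isHermitian

variable [Fintype n]

lemma IsSymm.dotProduct_mulVec_comm (hB : B.IsSymm) (x y : n → ℝ) :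
    x ⬝ᵥ B *ᵥ y = y ⬝ᵥ B *ᵥ x := by
  rw [dotProduct_mulVec, ← vecMul_transpose, hB.eq, dotProduct_comm]

lemma IsSymm.dotProduct_mulVec_smul_sub_smul (hB : B.IsSymm) (x y : n → ℝ) :
    ((x ⬝ᵥ B *ᵥ x) • y - (x ⬝ᵥ B *ᵥ y) • x) ⬝ᵥ B *ᵥ ((x ⬝ᵥ B *ᵥ x) • y - (x ⬝ᵥ B *ᵥ y) • x)
      = (x ⬝ᵥ B *ᵥ x) * ((x ⬝ᵥ B *ᵥ x) * (y ⬝ᵥ B *ᵥ y) - (x ⬝ᵥ B *ᵥ y) ^ 2) := by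
  simp only [mulVec_sub, mulVec_smul, dotProduct_sub, sub_dotProduct, dotProduct_smul,
    smul_dotProduct, smul_eq_mul, hB.dotProduct_mulVec_comm y x]
  ring

namespace PosDef

lemma dotProduct_mulVec_self_nonneg (hB : B.PosDef) (x : n → ℝ) : 0 ≤ x ⬝ᵥ B *ᵥ x := by
  simpa using hB.posSemidef.dotProduct_mulVec_nonneg x

lemma dotProduct_mulVec_self_pos (hB : B.PosDef) {x : n → ℝ} (hx : x ≠ 0) :
    0 < x ⬝ᵥ B *ᵥ x := by
  simpa using hB.dotProduct_mulVec_pos hx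

lemma sq_dotProduct_mulVec_le (hB : B.PosDef) (x y : n → ℝ) :
    (x ⬝ᵥ B *ᵥ y) ^ 2 ≤ (x ⬝ᵥ B *ᵥ x) * (y ⬝ᵥ B *ᵥ y) := by
  rcases eq_or_ne x 0 with rfl | hx
  · simp
  have hxx := hB.dotProduct_mulVec_self_pos hx
  have key := hB.dotProduct_mulVec_self_nonneg ((x ⬝ᵥ B *ᵥ x) • y - (x ⬝ᵥ B *ᵥ y) • x)
  rw [hB.isSymm.dotProduct_mulVec_smul_sub_smul] at key
  nlinarith [nonneg_of_mul_nonneg_right key hxx]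

lemma sq_dotProduct_mulVec_lt (hB : B.PosDef) {x y : n → ℝ} (hx : x ≠ 0) (hy : y ∉ ℝ ∙ x) :
    (x ⬝ᵥ B *ᵥ y) ^ 2 < (x ⬝ᵥ B *ᵥ x) * (y ⬝ᵥ B *ᵥ y) := by
  have hxx := hB.dotProduct_mulVec_self_pos hx
  have hz : (x ⬝ᵥ B *ᵥ x) • y - (x ⬝ᵥ B *ᵥ y) • x ≠ 0 := by
    intro hz
    refine hy (Submodule.mem_span_singleton.2 ⟨(x ⬝ᵥ B *ᵥ x)⁻¹ * (x ⬝ᵥ B *ᵥ y), ?_⟩)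
    rw [mul_smul, ← sub_eq_zero.1 hz, smul_smul, inv_mul_cancel₀ hxx.ne', one_smul]
  have key := hB.dotProduct_mulVec_self_pos hz
  rw [hB.isSymm.dotProduct_mulVec_smul_sub_smul] at key
  nlinarith [pos_of_mul_pos_right key hxx.le]

variable [DecidableEq n]

lemma inv_mulVec_dotProduct_mulVec (hB : B.PosDef) (v y : n → ℝ) :
    (B⁻¹ *ᵥ v) ⬝ᵥ B *ᵥ y = v ⬝ᵥ y := by
  rw [hB.isSymm.dotProduct_mulVec_comm, mulVec_mulVec,
    mul_nonsing_inv _ hB.det_pos.ne'.isUnit, one_mulVec, dotProduct_comm]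

lemma sq_dotProduct_le (hB : B.PosDef) (v y : n → ℝ) :
    (v ⬝ᵥ y) ^ 2 ≤ (v ⬝ᵥ B⁻¹ *ᵥ v) * (y ⬝ᵥ B *ᵥ y) := by
  simpa only [hB.inv_mulVec_dotProduct_mulVec] using hB.sq_dotProduct_mulVec_le (B⁻¹ *ᵥ v) y

lemma sq_dotProduct_lt (hB : B.PosDef) {v y : n → ℝ} (hv : v ≠ 0) (hy : y ∉ ℝ ∙ B⁻¹ *ᵥ v) :
    (v ⬝ᵥ y) ^ 2 < (v ⬝ᵥ B⁻¹ *ᵥ v) * (y ⬝ᵥ B *ᵥ y) := by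
  have hv' : B⁻¹ *ᵥ v ≠ 0 := fun h0 => hv <| by
    simpa [mulVec_mulVec, mul_nonsing_inv _ hB.det_pos.ne'.isUnit] using congrArg (B *ᵥ ·) h0
  simpa only [hB.inv_mulVec_dotProduct_mulVec] using hB.sq_dotProduct_mulVec_lt hv' hy

lemma abs_mul_apply_le (hB : B.PosDef) (y : n → ℝ) (i j : n) :
    |y i * y j| ≤ (B⁻¹ i i + B⁻¹ j j) * (y ⬝ᵥ B *ᵥ y) := by
  have hi := hB.sq_dotProduct_le (Pi.single i 1) y
  have hj := hB.sq_dotProduct_le (Pi.single j 1) y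
  simp only [single_dotProduct, one_mul, mulVec_single, MulOpposite.op_one, one_smul, col_apply]
    at hi hj
  rw [abs_mul]
  nlinarith [sq_abs (y i), sq_abs (y j), sq_nonneg (|y i| - |y j|)]

end PosDef

end Matrix

namespace Real

lemma inv_sqrt_mul_self (q : ℝ) : (√q)⁻¹ * q = √q := by
  rw [inv_mul_eq_div, div_sqrt]

/-- For `q ≤ 0` both sides vanish, since `√q = 0` and `0⁻¹ = 0`. -/
lemma inv_sqrt_mul_le {q t C : ℝ} (h : t ≤ C * q) : (√q)⁻¹ * t ≤ C * √q := by
  calc (√q)⁻¹ * t ≤ (√q)⁻¹ * (C * q) := mul_le_mul_of_nonneg_left h (by positivity)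
    _ = C * √q := by rw [mul_left_comm, inv_sqrt_mul_self]

lemma inv_sqrt_mul_lt {q t C : ℝ} (hq : 0 < q) (h : t < C * q) : (√q)⁻¹ * t < C * √q := by
  calc (√q)⁻¹ * t < (√q)⁻¹ * (C * q) := by gcongr
    _ = C * √q := by rw [mul_left_comm, inv_sqrt_mul_self]

end Real

lemma MeasureTheory.Measure.addHaar_span_singleton {E : Type*} [NormedAddCommGroup E]
    [NormedSpace ℝ E] [MeasurableSpace E] [BorelSpace E] [FiniteDimensional ℝ E]
    (μ : Measure E) [μ.IsAddHaarMeasure] (hE : 1 < Module.finrank ℝ E) (u : E) :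
    μ (ℝ ∙ u) = 0 := by
  refine μ.addHaar_submodule _ fun htop => hE.not_ge ?_
  rw [← finrank_top ℝ E, ← htop]
  exact (finrank_span_le_card {u}).trans (by simp)

lemma enorm3_nonneg (p : Vec3) : 0 ≤ enorm3 p := Real.sqrt_nonneg _

lemma abs_le_enorm3 (p : Vec3) (i : Fin 3) : |p i| ≤ enorm3 p := by
  rw [← Real.sqrt_sq_eq_abs]
  exact Real.sqrt_le_sqrt (Finset.single_le_sum (fun j _ => sq_nonneg (p j)) (Finset.mem_univ i))

lemma quadForm_le_mul_enorm3_sq (B : Mat3) (p : Vec3) :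
    quadForm B p ≤ (∑ i, ∑ j, |B i j|) * enorm3 p ^ 2 := by
  simp only [quadForm, dotProduct, mulVec, Finset.mul_sum, Finset.sum_mul]
  refine Finset.sum_le_sum fun i _ => Finset.sum_le_sum fun j _ => ?_
  calc p i * (B i j * p j) ≤ |B i j| * (|p i| * |p j|) := by
        rw [← abs_mul, ← abs_mul, mul_left_comm]; exact le_abs_self _
    _ ≤ |B i j| * enorm3 p ^ 2 := by
        rw [sq]
        exact mul_le_mul_of_nonneg_left (mul_le_mul (abs_le_enorm3 p i) (abs_le_enorm3 p j)
          (abs_nonneg _) (enorm3_nonneg p)) (abs_nonneg _)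

lemma continuous_quadForm (B : Mat3) : Continuous (quadForm B) := by
  unfold quadForm; fun_prop

section Integrals

variable {f : Vec3 → ℝ} {B : Mat3}

lemma integrable_sqrt_quadForm_mul (hf : Measurable f)
    (hint : Integrable fun p : Vec3 => enorm3 p * f p) :
    Integrable fun p => √(quadForm B p) * f p := by
  set C := ∑ i, ∑ j, |B i j|
  refine (hint.const_mul √C).mono
    ((continuous_quadForm B).measurable.sqrt.mul hf).aestronglyMeasurable
    (Eventually.of_forall fun p => ?_)
  have hQ : √(quadForm B p) ≤ √C * enorm3 p :=
    calc √(quadForm B p) ≤ √(C * enorm3 p ^ 2) := Real.sqrt_le_sqrt (quadForm_le_mul_enorm3_sq B p)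
      _ = √C * enorm3 p := by rw [Real.sqrt_mul' _ (sq_nonneg _), Real.sqrt_sq (enorm3_nonneg p)]
  simp only [norm_mul, Real.norm_eq_abs, abs_of_nonneg (Real.sqrt_nonneg _),
    abs_of_nonneg (enorm3_nonneg p)]
  rw [← mul_assoc]
  gcongr

lemma integrable_inv_sqrt_quadForm_mul (hf : Measurable f)
    (hS : Integrable fun p => √(quadForm B p) * f p) {g : Vec3 → ℝ} (hg : Measurable g)
    {C : ℝ} (hgC : ∀ p, |g p| ≤ C * quadForm B p) :
    Integrable fun p => (√(quadForm B p))⁻¹ * (g p * f p) := by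
  refine (hS.const_mul C).mono
    (((continuous_quadForm B).measurable.sqrt.inv.mul (hg.mul hf))).aestronglyMeasurable
    (Eventually.of_forall fun p => ?_)
  simp only [norm_mul, norm_inv, Real.norm_eq_abs, abs_of_nonneg (Real.sqrt_nonneg _)]
  calc (√(quadForm B p))⁻¹ * (|g p| * |f p|) = ((√(quadForm B p))⁻¹ * |g p|) * |f p| := by ring
    _ ≤ (C * √(quadForm B p)) * |f p| :=
        mul_le_mul_of_nonneg_right (Real.inv_sqrt_mul_le (hgC p)) (abs_nonneg _)
    _ ≤ |C| * (√(quadForm B p) * |f p|) := by rw [mul_assoc]; gcongr; exact le_abs_self C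

lemma sum_mul_PsiM_apply (hB : B.PosDef) (hf : Measurable f)
    (hS : Integrable fun p => √(quadForm B p) * f p) (w : Fin 3 → Fin 3 → ℝ) :
    ∑ i, ∑ j, w i j * PsiM f B i j = 4 * π * √B.det *
      ∫ p, (√(quadForm B p))⁻¹ * ((∑ i, ∑ j, w i j * (p i * p j)) * f p) := by
  have hint (i j : Fin 3) : Integrable fun p : Vec3 => (√(quadForm B p))⁻¹ * (p i * p j * f p) :=
    integrable_inv_sqrt_quadForm_mul hf hS (by fun_prop) (hB.abs_mul_apply_le · i j)
  have hpt (p : Vec3) : (√(quadForm B p))⁻¹ * ((∑ i, ∑ j, w i j * (p i * p j)) * f p)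
      = ∑ i, ∑ j, w i j * ((√(quadForm B p))⁻¹ * (p i * p j * f p)) := by
    simp only [Finset.sum_mul, Finset.mul_sum]
    exact Finset.sum_congr rfl fun i _ => Finset.sum_congr rfl fun j _ => by ring
  simp only [hpt, PsiM, of_apply]
  rw [integral_finsetSum _ fun i _ => integrable_finsetSum _ fun j _ => (hint i j).const_mul _,
    Finset.mul_sum]
  refine Finset.sum_congr rfl fun i _ => ?_
  rw [integral_finsetSum _ fun j _ => (hint i j).const_mul _, Finset.mul_sum]
  refine Finset.sum_congr rfl fun j _ => ?_
  rw [integral_const_mul]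
  ring

lemma dotProduct_PsiM_mulVec (hB : B.PosDef) (hf : Measurable f)
    (hS : Integrable fun p => √(quadForm B p) * f p) (h : Vec3) :
    h ⬝ᵥ PsiM f B *ᵥ h
      = 4 * π * √B.det * ∫ p, (√(quadForm B p))⁻¹ * ((h ⬝ᵥ p) ^ 2 * f p) := by
  convert sum_mul_PsiM_apply hB hf hS (fun i j => h i * h j) using 1
  · simp only [dotProduct, mulVec, Finset.mul_sum]
    exact Finset.sum_congr rfl fun i _ => Finset.sum_congr rfl fun j _ => by ring
  · congr! 4 with p
    simp only [sq, dotProduct, Finset.sum_mul_sum]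
    congr! 3 with i _ j _
    ring

lemma trace_mul_PsiM (hB : B.PosDef) (hf : Measurable f)
    (hS : Integrable fun p => √(quadForm B p) * f p) :
    (B * PsiM f B).trace = 4 * π * √B.det * ∫ p, √(quadForm B p) * f p := by
  convert sum_mul_PsiM_apply hB hf hS (fun i j => B j i) using 1
  · rw [trace, Finset.sum_comm]
    simp only [diag, mul_apply]
  · have hQ (p : Vec3) : ∑ i, ∑ j, B j i * (p i * p j) = quadForm B p := by
      simp only [quadForm, dotProduct, mulVec, Finset.mul_sum]
      rw [Finset.sum_comm]
      exact Finset.sum_congr rfl fun i _ => Finset.sum_congr rfl fun j _ => by ring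
    simp_rw [hQ, ← mul_assoc, Real.inv_sqrt_mul_self]

end Integrals

namespace FuchsCond

variable {f : Vec3 → ℝ} {h : Vec3} {B : Mat3}

lemma two_mul_dotProduct_PsiM_mulVec (hF : FuchsCond f h B) :
    2 * (h ⬝ᵥ PsiM f B *ᵥ h) = h ⬝ᵥ B⁻¹ *ᵥ h + 2 * (h ⬝ᵥ B⁻¹ *ᵥ h) ^ 2 / B⁻¹.det := by
  have e := congrArg (fun M : Mat3 => h ⬝ᵥ M *ᵥ h) hF
  simp only [smul_mulVec, sub_mulVec, dotProduct_smul, dotProduct_sub, smul_eq_mul,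
    vecMulVec_mulVec, op_smul_eq_smul, dotProduct_comm _ h] at e
  rw [e]
  ring

lemma two_mul_trace_mul_PsiM (hB : IsUnit B.det) (hF : FuchsCond f h B) :
    2 * (B * PsiM f B).trace = 3 - 2 * (h ⬝ᵥ B⁻¹ *ᵥ h) / B⁻¹.det := by
  have e := congrArg (fun M : Mat3 => (B * M).trace) hF
  simp only [Matrix.mul_smul, Matrix.mul_sub, trace_smul, trace_sub, smul_eq_mul,
    mul_nonsing_inv _ hB, trace_one, Fintype.card_fin, mul_vecMulVec, trace_vecMulVec,
    mulVec_mulVec, one_mulVec] at e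
  rw [e]
  ring

end FuchsCond

lemma integral_inv_sqrt_quadForm_mul_lt {f : Vec3 → ℝ} {B : Mat3} (hB : B.PosDef)
    (hf : Measurable f) (hf0 : ∀ p, 0 ≤ f p) (hne : ¬ f =ᵐ[volume] 0)
    (hS : Integrable fun p => √(quadForm B p) * f p) {h : Vec3} (hh : h ≠ 0) :
    ∫ p, (√(quadForm B p))⁻¹ * ((h ⬝ᵥ p) ^ 2 * f p)
      < (h ⬝ᵥ B⁻¹ *ᵥ h) * ∫ p, √(quadForm B p) * f p := by
  set α := h ⬝ᵥ B⁻¹ *ᵥ h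
  have hJ : Integrable fun p => (√(quadForm B p))⁻¹ * ((h ⬝ᵥ p) ^ 2 * f p) :=
    integrable_inv_sqrt_quadForm_mul hf hS (by fun_prop) fun p => by
      rw [abs_sq]; exact hB.sq_dotProduct_le h p
  set φ := fun p => α * (√(quadForm B p) * f p) - (√(quadForm B p))⁻¹ * ((h ⬝ᵥ p) ^ 2 * f p)
  have hφ (p : Vec3) : φ p = (α * √(quadForm B p) - (√(quadForm B p))⁻¹ * (h ⬝ᵥ p) ^ 2) * f p := by
    simp only [φ]; ring
  have hφ0 : 0 ≤ φ := fun p => by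
    rw [Pi.zero_apply, hφ]
    exact mul_nonneg (sub_nonneg.2 (Real.inv_sqrt_mul_le (hB.sq_dotProduct_le h p))) (hf0 p)
  have hsupp : Function.support f \ (ℝ ∙ B⁻¹ *ᵥ h : Submodule ℝ Vec3) ⊆ Function.support φ := by
    rintro p ⟨hfp, hp⟩
    have hp0 : p ≠ 0 := fun h0 => hp (h0 ▸ Submodule.zero_mem _)
    rw [Function.mem_support, hφ]
    exact (mul_pos (sub_pos.2 (Real.inv_sqrt_mul_lt (hB.dotProduct_mulVec_self_pos hp0)
      (hB.sq_dotProduct_lt hh hp))) ((hf0 p).lt_of_ne' hfp)).ne'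
  have hφpos : 0 < ∫ p, φ p := by
    rw [integral_pos_iff_support_of_nonneg hφ0 ((hS.const_mul α).sub hJ)]
    calc 0 < volume (Function.support f) := pos_iff_ne_zero.2 fun h0 => hne (ae_iff.2 h0)
      _ = volume (Function.support f \ (ℝ ∙ B⁻¹ *ᵥ h : Submodule ℝ Vec3)) :=
        (measure_sdiff_null (volume.addHaar_span_singleton (by simp) _)).symm
      _ ≤ volume (Function.support φ) := measure_mono hsupp
  rw [integral_sub (hS.const_mul α) hJ, integral_const_mul] at hφpos
  linarith

/-- the Fuchsian condition forces hᵀAh < (det A)/2, A = B⁻¹. -/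
theorem fuchs_magnetic_bound (f : Vec3 → ℝ) (h : Vec3)
    (hmeas : Measurable f) (hnonneg : ∀ p, 0 ≤ f p) (hne : ¬ f =ᵐ[volume] 0)
    (hint : Integrable (fun p : Vec3 => enorm3 p * f p))
    (B : Mat3) (hB : B.PosDef) (hF : FuchsCond f h B) :
    h ⬝ᵥ (B⁻¹).mulVec h < (B⁻¹).det / 2 := by
  have hd : 0 < B⁻¹.det := hB.inv.det_pos
  rcases eq_or_ne h 0 with rfl | hh
  · simpa using half_pos hd
  have hα : 0 < h ⬝ᵥ B⁻¹ *ᵥ h := hB.inv.dotProduct_mulVec_self_pos hh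
  have hc : 0 < 4 * π * √B.det := by have := hB.det_pos; positivity
  have hS := integrable_sqrt_quadForm_mul (B := B) hmeas hint
  have hJ := hF.two_mul_dotProduct_PsiM_mulVec
  have hT := hF.two_mul_trace_mul_PsiM hB.det_pos.ne'.isUnit
  rw [dotProduct_PsiM_mulVec hB hmeas hS] at hJ
  rw [trace_mul_PsiM hB hmeas hS] at hT
  have hJS := mul_lt_mul_of_pos_left
    (integral_inv_sqrt_quadForm_mul_lt hB hmeas hnonneg hne hS hh) hc
  set c := 4 * π * √B.det
  set J := ∫ p, (√(quadForm B p))⁻¹ * ((h ⬝ᵥ p) ^ 2 * f p)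
  set S := ∫ p, √(quadForm B p) * f p
  set α := h ⬝ᵥ B⁻¹ *ᵥ h
  have key : α * (1 + 2 * (α / B⁻¹.det)) < α * (3 - 2 * (α / B⁻¹.det)) :=
    calc α * (1 + 2 * (α / B⁻¹.det)) = 2 * (c * J) := by rw [hJ]; ring
      _ < α * (2 * (c * S)) := by linarith
      _ = α * (3 - 2 * (α / B⁻¹.det)) := by rw [hT]; ring
  have hratio : α / B⁻¹.det < 1 / 2 := by linarith [lt_of_mul_lt_mul_left key hα.le]
  rwa [div_lt_iff₀ hd, one_div_mul_eq_div] at hratio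
end
end
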